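/- Let G : ℝ × ℝ → ℝ be twice continuously differentiable in a neighbourhood of (x*, p*), with G(x*, p*) = 0 and ∂G/∂x (x*, p*) = 0. Assume ∂G/∂p (x*, p*) ≠ 0, ∂²G/∂x² (x*, p*) ≠ 0, and ∂G/∂p (x*, p*) · ∂²G/∂x² (x*, p*) > 0. Then there exist ε > 0 and δ > 0 such that for every p with p* < p < p* + δ the equation G(x, p) = 0 has no solution x with |x − x*| < ε, while for every p with p* − δ < p < p* it has exactly two solutions x with |x − x*| < ε. -/

import Mathlib

/-!
Replacing `G` by `-G` if necessary, `G_p > 0` and `G_xx > 0` at `(xs, ps)`, hence on a square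
of half-width `r` around it. There every slice `x ↦ G (x, p)` is strictly convex and every
slice `p ↦ G (x, p)` is strictly increasing. The slice at `ps` is strictly convex with a
critical zero at `xs`, so it is positive away from `xs`; hence `G > 0` for `p > ps`. For
`p < ps` we get `G (xs, p) < 0`, while `G (xs ± r, p) > 0` still holds by continuity, so the
intermediate value theorem gives a zero on each side of `xs`, and strict convexity excludes a
third one.
-/

open Set Filter Topology

section PartialDerivatives

variable {𝕜 F : Type*} [NontriviallyNormedField 𝕜] [NormedAddCommGroup F] [NormedSpace 𝕜 F]

noncomputable def partialFst (f : 𝕜 × 𝕜 → F) (z : 𝕜 × 𝕜) : F := fderiv 𝕜 f z (1, 0)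

noncomputable def partialSnd (f : 𝕜 × 𝕜 → F) (z : 𝕜 × 𝕜) : F := fderiv 𝕜 f z (0, 1)

variable {f : 𝕜 × 𝕜 → F}

theorem DifferentiableAt.hasDerivAt_partialFst {x p : 𝕜} (hf : DifferentiableAt 𝕜 f (x, p)) :
    HasDerivAt (fun y => f (y, p)) (partialFst f (x, p)) x :=
  hf.hasFDerivAt.comp_hasDerivAt x ((hasDerivAt_id x).prodMk (hasDerivAt_const x p))

theorem DifferentiableAt.hasDerivAt_partialSnd {x p : 𝕜} (hf : DifferentiableAt 𝕜 f (x, p)) :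
    HasDerivAt (fun q => f (x, q)) (partialSnd f (x, p)) p :=
  hf.hasFDerivAt.comp_hasDerivAt p ((hasDerivAt_const p x).prodMk (hasDerivAt_id p))

theorem ContDiffAt.partialFst {m n : WithTop ℕ∞} {z : 𝕜 × 𝕜} (hf : ContDiffAt 𝕜 n f z)
    (hmn : m + 1 ≤ n) : ContDiffAt 𝕜 m (_root_.partialFst f) z :=
  (hf.fderiv_right hmn).clm_apply contDiffAt_const

theorem ContDiffAt.partialSnd {m n : WithTop ℕ∞} {z : 𝕜 × 𝕜} (hf : ContDiffAt 𝕜 n f z)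
    (hmn : m + 1 ≤ n) : ContDiffAt 𝕜 m (_root_.partialSnd f) z :=
  (hf.fderiv_right hmn).clm_apply contDiffAt_const

theorem deriv_deriv_eq_partialFst_partialFst {x p : 𝕜} (hf : ContDiffAt 𝕜 2 f (x, p)) :
    deriv (deriv fun y => f (y, p)) x = partialFst (partialFst f) (x, p) := by
  have hslice : (deriv fun y => f (y, p)) =ᶠ[𝓝 x] fun y => partialFst f (y, p) := by
    have hdiff : ∀ᶠ z in 𝓝 (x, p), DifferentiableAt 𝕜 f z :=
      (hf.eventually (by simp)).mono fun z hz => hz.differentiableAt (by simp)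
    filter_upwards [(continuous_id.prodMk continuous_const).continuousAt.eventually hdiff]
      with y hy using hy.hasDerivAt_partialFst.deriv
  have hdiff : DifferentiableAt 𝕜 (partialFst f) (x, p) :=
    (hf.partialFst (m := 1) (by norm_num)).differentiableAt one_ne_zero
  rw [hslice.deriv_eq, hdiff.hasDerivAt_partialFst.deriv]

end PartialDerivatives

theorem strictConvexOn_of_hasDerivAt2_pos {D : Set ℝ} (hD : Convex ℝ D) {f f' f'' : ℝ → ℝ}
    (hf : ∀ x ∈ D, HasDerivAt f (f' x) x) (hf' : ∀ x ∈ D, HasDerivAt f' (f'' x) x)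
    (hf'' : ∀ x ∈ D, 0 < f'' x) : StrictConvexOn ℝ D f := by
  have hmono : StrictMonoOn f' D :=
    strictMonoOn_of_hasDerivWithinAt_pos hD
      (fun x hx => (hf' x hx).continuousAt.continuousWithinAt)
      (fun x hx => (hf' x (interior_subset hx)).hasDerivWithinAt)
      (fun x hx => hf'' x (interior_subset hx))
  refine StrictMonoOn.strictConvexOn_of_deriv hD
    (fun x hx => (hf x hx).continuousAt.continuousWithinAt) ?_
  exact (hmono.mono interior_subset).congr fun x hx => ((hf x (interior_subset hx)).deriv).symm

namespace StrictConvexOn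

variable {s : Set ℝ} {f : ℝ → ℝ}

theorem lt_of_hasDerivAt_eq_zero {x₀ y : ℝ} (hf : StrictConvexOn ℝ s f) (hx₀ : x₀ ∈ s)
    (hy : y ∈ s) (hne : y ≠ x₀) (hf' : HasDerivAt f 0 x₀) : f x₀ < f y := by
  rcases hne.lt_or_gt with hlt | hlt
  · exact (slope_neg_iff_of_le hlt.le).1 (hf.slope_lt_of_hasDerivAt hy hx₀ hlt hf')
  · exact (slope_pos_iff_of_le hlt.le).1 (hf.lt_slope_of_hasDerivAt hx₀ hy hlt hf')

theorem eq_or_eq_of_apply_eq {x₁ x₂ x c : ℝ} (hf : StrictConvexOn ℝ s f) (hx₁ : x₁ ∈ s)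
    (hx₂ : x₂ ∈ s) (hx : x ∈ s) (h₁₂ : x₁ < x₂) (hfx₁ : f x₁ = c) (hfx₂ : f x₂ = c)
    (hfx : f x = c) : x = x₁ ∨ x = x₂ := by
  have hmiddle : ∀ u v w, u ∈ s → w ∈ s → u < v → v < w → f u = c → f v = c → f w = c → False := by
    intro u v w hu hw huv hvw hfu hfv hfw
    have := hf.lt_on_openSegment hu hw (huv.trans hvw).ne
      (by rw [openSegment_eq_Ioo (huv.trans hvw)]; exact ⟨huv, hvw⟩)
    rw [hfu, hfv, hfw, max_self] at this
    exact this.false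
  rcases lt_trichotomy x x₁ with h | h | h
  · exact (hmiddle x x₁ x₂ hx hx₂ h h₁₂ hfx hfx₁ hfx₂).elim
  · exact .inl h
  rcases lt_trichotomy x x₂ with h' | h' | h'
  · exact (hmiddle x₁ x x₂ hx₁ hx₂ h h' hfx₁ hfx hfx₂).elim
  · exact .inr h'
  · exact (hmiddle x₁ x₂ x hx₁ hx h₁₂ h' hfx₁ hfx₂ hfx).elim

theorem exists_two_zeros {a b c : ℝ} (hf : StrictConvexOn ℝ (Icc a b) f)
    (hcont : ContinuousOn f (Icc a b)) (hac : a ≤ c) (hcb : c ≤ b) (ha : 0 < f a) (hc : f c < 0)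
    (hb : 0 < f b) :
    ∃ x₁ x₂, x₁ < x₂ ∧ x₁ ∈ Ioo a b ∧ x₂ ∈ Ioo a b ∧ f x₁ = 0 ∧ f x₂ = 0 ∧
      ∀ x ∈ Ioo a b, f x = 0 → x = x₁ ∨ x = x₂ := by
  obtain ⟨x₁, ⟨hax₁, hx₁c⟩, hfx₁⟩ :=
    intermediate_value_Ioo' hac (hcont.mono (Icc_subset_Icc_right hcb)) ⟨hc, ha⟩
  obtain ⟨x₂, ⟨hcx₂, hx₂b⟩, hfx₂⟩ :=
    intermediate_value_Ioo hcb (hcont.mono (Icc_subset_Icc_left hac)) ⟨hc, hb⟩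
  have hx₁ : x₁ ∈ Ioo a b := ⟨hax₁, hx₁c.trans_le hcb⟩
  have hx₂ : x₂ ∈ Ioo a b := ⟨hac.trans_lt hcx₂, hx₂b⟩
  exact ⟨x₁, x₂, hx₁c.trans hcx₂, hx₁, hx₂, hfx₁, hfx₂, fun x hx hfx =>
    hf.eq_or_eq_of_apply_eq (Ioo_subset_Icc_self hx₁) (Ioo_subset_Icc_self hx₂)
      (Ioo_subset_Icc_self hx) (hx₁c.trans hcx₂) hfx₁ hfx₂ hfx⟩

end StrictConvexOn

theorem exists_Icc_prod_subset {s : Set (ℝ × ℝ)} {x p : ℝ} (hs : s ∈ 𝓝 (x, p)) :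
    ∃ r > 0, Icc (x - r) (x + r) ×ˢ Icc (p - r) (p + r) ⊆ s := by
  obtain ⟨r, hr, hrs⟩ := Metric.nhds_basis_closedBall.mem_iff.1 hs
  refine ⟨r, hr, ?_⟩
  rwa [← Real.closedBall_eq_Icc, ← Real.closedBall_eq_Icc, closedBall_prod_same]

theorem eventually_partials_pos {G : ℝ × ℝ → ℝ} {z : ℝ × ℝ} (hG : ContDiffAt ℝ 2 G z)
    (hGp : 0 < partialSnd G z) (hGxx : 0 < partialFst (partialFst G) z) :
    ∀ᶠ w in 𝓝 z, DifferentiableAt ℝ G w ∧ DifferentiableAt ℝ (partialFst G) w ∧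
      0 < partialSnd G w ∧ 0 < partialFst (partialFst G) w := by
  have hC2 : ∀ᶠ w in 𝓝 z, ContDiffAt ℝ 2 G w := hG.eventually (by simp)
  have hGp_cont : ContinuousAt (partialSnd G) z :=
    (hG.partialSnd (m := 1) (by norm_num)).continuousAt
  have hGxx_cont : ContinuousAt (partialFst (partialFst G)) z :=
    ((hG.partialFst (m := 1) (by norm_num)).partialFst (m := 0) (by norm_num)).continuousAt
  filter_upwards [hC2, hGp_cont.eventually (lt_mem_nhds hGp),
    hGxx_cont.eventually (lt_mem_nhds hGxx)] with w hw hwp hwxx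
  exact ⟨hw.differentiableAt (by simp),
    (hw.partialFst (m := 1) (by norm_num)).differentiableAt one_ne_zero, hwp, hwxx⟩

def HasSaddleNodeZeros (G : ℝ × ℝ → ℝ) (xs ps : ℝ) : Prop :=
  ∃ ε > (0:ℝ), ∃ δ > (0:ℝ),
    (∀ p : ℝ, ps < p → p < ps + δ →
      ∀ x : ℝ, |x - xs| < ε → G (x, p) ≠ 0) ∧
    (∀ p : ℝ, ps - δ < p → p < ps →
      ∃ x₁ x₂ : ℝ, x₁ < x₂ ∧
        x₁ ∈ Ioo (xs - ε) (xs + ε) ∧ x₂ ∈ Ioo (xs - ε) (xs + ε) ∧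
        G (x₁, p) = 0 ∧ G (x₂, p) = 0 ∧
        ∀ x ∈ Ioo (xs - ε) (xs + ε), G (x, p) = 0 → x = x₁ ∨ x = x₂)

theorem hasSaddleNodeZeros_neg_iff {G : ℝ × ℝ → ℝ} {xs ps : ℝ} :
    HasSaddleNodeZeros (fun z => -G z) xs ps ↔ HasSaddleNodeZeros G xs ps := by
  simp only [HasSaddleNodeZeros, ne_eq, neg_eq_zero]

theorem hasSaddleNodeZeros_of_strictConvexOn_of_strictMonoOn {G : ℝ × ℝ → ℝ} {xs ps r : ℝ}
    (hr : 0 < r) (hcont : ∀ z ∈ Icc (xs - r) (xs + r) ×ˢ Icc (ps - r) (ps + r), ContinuousAt G z)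
    (hconv : ∀ p ∈ Icc (ps - r) (ps + r),
      StrictConvexOn ℝ (Icc (xs - r) (xs + r)) fun x => G (x, p))
    (hmono : ∀ x ∈ Icc (xs - r) (xs + r),
      StrictMonoOn (fun p => G (x, p)) (Icc (ps - r) (ps + r)))
    (h0 : G (xs, ps) = 0) (hGx : HasDerivAt (fun x => G (x, ps)) 0 xs) :
    HasSaddleNodeZeros G xs ps := by
  have hxs : xs ∈ Icc (xs - r) (xs + r) := ⟨by linarith, by linarith⟩
  have hps : ps ∈ Icc (ps - r) (ps + r) := ⟨by linarith, by linarith⟩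
  have hpos : ∀ x ∈ Icc (xs - r) (xs + r), x ≠ xs → 0 < G (x, ps) := fun x hx hne =>
    h0 ▸ (hconv ps hps).lt_of_hasDerivAt_eq_zero hxs hx hne hGx
  have hend : ∀ y ∈ Icc (xs - r) (xs + r), y ≠ xs → ∀ᶠ p in 𝓝 ps, 0 < G (y, p) :=
    fun y hy hne => ((hcont (y, ps) ⟨hy, hps⟩).comp (f := fun p => (y, p))
      (continuous_const.prodMk continuous_id).continuousAt).eventually (lt_mem_nhds (hpos y hy hne))
  have hnear : ∀ᶠ p in 𝓝 ps,
      (0 < G (xs - r, p) ∧ 0 < G (xs + r, p)) ∧ p ∈ Icc (ps - r) (ps + r) :=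
    ((hend (xs - r) ⟨by linarith, by linarith⟩ (by linarith)).and
      (hend (xs + r) ⟨by linarith, by linarith⟩ (by linarith))).and
      (Icc_mem_nhds (by linarith) (by linarith))
  obtain ⟨δ, hδ, hδball⟩ := Metric.eventually_nhds_iff.1 hnear
  have hδ' : ∀ p, ps - δ < p → p < ps + δ →
      (0 < G (xs - r, p) ∧ 0 < G (xs + r, p)) ∧ p ∈ Icc (ps - r) (ps + r) :=
    fun p hp₁ hp₂ => hδball (by rw [Real.dist_eq, abs_lt]; constructor <;> linarith)
  refine ⟨r, hr, δ, hδ, fun p hp₁ hp₂ x hx => ?_, fun p hp₁ hp₂ => ?_⟩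
  · obtain ⟨-, hpJ⟩ := hδ' p (by linarith) hp₂
    have hxI : x ∈ Icc (xs - r) (xs + r) := by rw [abs_lt] at hx; constructor <;> linarith
    have hG_ps : 0 ≤ G (x, ps) := by
      rcases eq_or_ne x xs with rfl | hne
      · exact h0.ge
      · exact (hpos x hxI hne).le
    exact (hG_ps.trans_lt (hmono x hxI hps hpJ hp₁)).ne'
  · obtain ⟨⟨hleft, hright⟩, hpJ⟩ := hδ' p hp₁ (by linarith)
    have hcentre : G (xs, p) < 0 := h0 ▸ hmono xs hxs hpJ hps hp₂
    exact (hconv p hpJ).exists_two_zeros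
      (fun x hx => (hcont (x, p) ⟨hx, hpJ⟩).comp (f := fun x => (x, p))
        (continuous_id.prodMk continuous_const).continuousAt |>.continuousWithinAt)
      hxs.1 hxs.2 hleft hcentre hright

theorem hasSaddleNodeZeros_of_pos {G : ℝ × ℝ → ℝ} {xs ps : ℝ} (hG : ContDiffAt ℝ 2 G (xs, ps))
    (h0 : G (xs, ps) = 0) (hGx : deriv (fun x => G (x, ps)) xs = 0)
    (hGp : 0 < deriv (fun p => G (xs, p)) ps) (hGxx : 0 < deriv (deriv fun x => G (x, ps)) xs) :
    HasSaddleNodeZeros G xs ps := by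
  have hdiff : DifferentiableAt ℝ G (xs, ps) := hG.differentiableAt (by simp)
  rw [hdiff.hasDerivAt_partialSnd.deriv] at hGp
  rw [deriv_deriv_eq_partialFst_partialFst hG] at hGxx
  obtain ⟨r, hr, hsquare⟩ := exists_Icc_prod_subset (eventually_partials_pos hG hGp hGxx)
  refine hasSaddleNodeZeros_of_strictConvexOn_of_strictMonoOn hr
    (fun z hz => (hsquare hz).1.continuousAt) (fun p hp => ?_) (fun x hx => ?_) h0
    (hGx ▸ hdiff.hasDerivAt_partialFst.differentiableAt.hasDerivAt)
  · exact strictConvexOn_of_hasDerivAt2_pos (convex_Icc _ _)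
      (fun x hx => (hsquare ⟨hx, hp⟩).1.hasDerivAt_partialFst)
      (fun x hx => (hsquare ⟨hx, hp⟩).2.1.hasDerivAt_partialFst)
      (fun x hx => (hsquare ⟨hx, hp⟩).2.2.2)
  · exact strictMonoOn_of_hasDerivWithinAt_pos (convex_Icc _ _)
      (fun p hp => (hsquare ⟨hx, hp⟩).1.hasDerivAt_partialSnd.continuousAt.continuousWithinAt)
      (fun p hp => (hsquare ⟨hx, interior_subset hp⟩).1.hasDerivAt_partialSnd.hasDerivWithinAt)
      (fun p hp => (hsquare ⟨hx, interior_subset hp⟩).2.2.1)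

theorem saddle_node_reversed_case_general
    (G : ℝ × ℝ → ℝ) (xs ps : ℝ)
    (hG : ContDiffAt ℝ 2 G (xs, ps))
    (h0 : G (xs, ps) = 0)
    (hGx : deriv (fun x => G (x, ps)) xs = 0)
    (hsign : deriv (fun p => G (xs, p)) ps *
        deriv (deriv (fun x => G (x, ps))) xs > 0) :
    ∃ ε > (0:ℝ), ∃ δ > (0:ℝ),
      (∀ p : ℝ, ps < p → p < ps + δ →
        ∀ x : ℝ, |x - xs| < ε → G (x, p) ≠ 0) ∧
      (∀ p : ℝ, ps - δ < p → p < ps →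
        ∃ x₁ x₂ : ℝ, x₁ < x₂ ∧
          x₁ ∈ Set.Ioo (xs - ε) (xs + ε) ∧ x₂ ∈ Set.Ioo (xs - ε) (xs + ε) ∧
          G (x₁, p) = 0 ∧ G (x₂, p) = 0 ∧
          ∀ x ∈ Set.Ioo (xs - ε) (xs + ε), G (x, p) = 0 → x = x₁ ∨ x = x₂) := by
  change HasSaddleNodeZeros G xs ps
  rcases mul_pos_iff.1 hsign with ⟨hGp, hGxx⟩ | ⟨hGp, hGxx⟩
  · exact hasSaddleNodeZeros_of_pos hG h0 hGx hGp hGxx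
  · rw [← hasSaddleNodeZeros_neg_iff]
    exact hasSaddleNodeZeros_of_pos hG.neg (by simp [h0]) (by simp [hGx]) (by simpa using hGp)
      (by simpa using hGxx)

/-- Saddle-node bifurcation theorem, reversed case (`G_p · G_xx > 0`): no
stationary points near `(xs, ps)` for `p` slightly above `ps`, and exactly two
for `p` slightly below `ps`. -/
theorem saddle_node_reversed_case
    (G : ℝ × ℝ → ℝ) (xs ps : ℝ)
    (hG : ContDiffAt ℝ 2 G (xs, ps))
    (h0 : G (xs, ps) = 0)
    (hGx : deriv (fun x => G (x, ps)) xs = 0)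
    (hGp : deriv (fun p => G (xs, p)) ps ≠ 0)
    (hGxx : deriv (deriv (fun x => G (x, ps))) xs ≠ 0)
    (hsign : deriv (fun p => G (xs, p)) ps *
        deriv (deriv (fun x => G (x, ps))) xs > 0) :
    ∃ ε > (0:ℝ), ∃ δ > (0:ℝ),
      (∀ p : ℝ, ps < p → p < ps + δ →
        ∀ x : ℝ, |x - xs| < ε → G (x, p) ≠ 0) ∧
      (∀ p : ℝ, ps - δ < p → p < ps →
        ∃ x₁ x₂ : ℝ, x₁ < x₂ ∧
          x₁ ∈ Set.Ioo (xs - ε) (xs + ε) ∧ x₂ ∈ Set.Ioo (xs - ε) (xs + ε) ∧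
          G (x₁, p) = 0 ∧ G (x₂, p) = 0 ∧
          ∀ x ∈ Set.Ioo (xs - ε) (xs + ε), G (x, p) = 0 → x = x₁ ∨ x = x₂) :=
  saddle_node_reversed_case_general G xs ps hG h0 hGx hsign
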